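/- arXiv:1806.05561 — 9 statements merged into one kernel-verified Lean document; each statement's English description precedes it below -/
import Mathlib

section
/- Let I₀ > 0, K > 0, α > 0, β > 0 be real parameters and let q > 0. Then the GSLS gain g(q) = (I₀/K)·(q^K − 1) + (α·I₀/(β·K))·(q^(−β·K) − 1) satisfies g(q) ≥ I₀·(1 − α)·ln(q). -/
theorem gsls_gain_lower_bound (I₀ K α β q : ℝ)
    (hI : 0 < I₀) (hK : 0 < K) (hα : 0 < α) (hβ : 0 < β) (hq : 0 < q) :
    (I₀ / K) * (q ^ K - 1) + (α * I₀ / (β * K)) * (q ^ (-(β * K)) - 1) ≥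
      I₀ * (1 - α) * Real.log q := by
  have h1 : ∀ c : ℝ, q ^ c ≥ 1 + c * Real.log q := by
    intro c
    rw [Real.rpow_def_of_pos hq]
    nlinarith [Real.add_one_le_exp (Real.log q * c)]
  have e1 := h1 K
  have e2 := h1 (-(β * K))
  have hp1 : (0:ℝ) < I₀ / K := div_pos hI hK
  have hp2 : (0:ℝ) < α * I₀ / (β * K) := div_pos (mul_pos hα hI) (mul_pos hβ hK)
  have b1 : (I₀ / K) * (q ^ K - 1) ≥ (I₀ / K) * (K * Real.log q) := by
    apply mul_le_mul_of_nonneg_left (by linarith) hp1.le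
  have b2 : (α * I₀ / (β * K)) * (q ^ (-(β * K)) - 1) ≥
      (α * I₀ / (β * K)) * (-(β * K) * Real.log q) := by
    apply mul_le_mul_of_nonneg_left (by linarith) hp2.le
  have s1 : (I₀ / K) * (K * Real.log q) = I₀ * Real.log q := by
    field_simp
  have s2 : (α * I₀ / (β * K)) * (-(β * K) * Real.log q) = -(α * I₀ * Real.log q) := by
    field_simp
  nlinarith [b1, b2]
end

section
/- (Theorem 1) Let I₀ > 0, K > 0, α > 0, β > 0 be real parameters and let q > 0 satisfy (1 − α)·ln(q) ≥ 0. Then the GSLS gain g(q) = (I₀/K)·(q^K − 1) + (α·I₀/(β·K))·(q^(−β·K) − 1) is nonnegative: g(q) ≥ 0. -/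
lemma rpow_sub_one_ge (q a : ℝ) (hq : 0 < q) :
    q ^ a - 1 ≥ a * Real.log q := by
  have h := Real.add_one_le_exp (a * Real.log q)
  rw [Real.rpow_def_of_pos hq, mul_comm]
  linarith

theorem gsls_gain_nonneg (I₀ K α β q : ℝ)
    (hI : 0 < I₀) (hK : 0 < K) (hα : 0 < α) (hβ : 0 < β) (hq : 0 < q)
    (hcond : (1 - α) * Real.log q ≥ 0) :
    (I₀ / K) * (q ^ K - 1) + (α * I₀ / (β * K)) * (q ^ (-(β * K)) - 1) ≥ 0 := by
  have h1 := rpow_sub_one_ge q K hq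
  have h2 := rpow_sub_one_ge q (-(β * K)) hq
  have c1 : (0:ℝ) < I₀ / K := div_pos hI hK
  have c2 : (0:ℝ) < α * I₀ / (β * K) := div_pos (mul_pos hα hI) (mul_pos hβ hK)
  have e1 : (I₀ / K) * (q ^ K - 1) ≥ (I₀ / K) * (K * Real.log q) :=
    mul_le_mul_of_nonneg_left h1 c1.le
  have e2 : (α * I₀ / (β * K)) * (q ^ (-(β * K)) - 1) ≥
      (α * I₀ / (β * K)) * (-(β * K) * Real.log q) :=
    mul_le_mul_of_nonneg_left h2 c2.le
  have eq1 : (I₀ / K) * (K * Real.log q) = I₀ * Real.log q := by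
    field_simp
  have eq2 : (α * I₀ / (β * K)) * (-(β * K) * Real.log q) = -(α * I₀ * Real.log q) := by
    field_simp
  nlinarith [hcond, mul_pos hI (mul_pos hβ hK)]
end

section
/- (Theorem 2) Let I₀ > 0, α > 0 and q > 0 be real numbers, and define g(K_L, K_S) = I₀·(q^{K_L} − 1)/K_L + α·I₀·(q^(−K_S) − 1)/K_S for K_L > 0, K_S > 0. Then g is monotone nondecreasing in each argument: if 0 < K_L ≤ K_L' and 0 < K_S ≤ K_S' then g(K_L, K_S) ≤ g(K_L', K_S'). -/
/-! Both legs are secant slopes of the convex function `t ↦ q ^ t` at `t = 0`: the long leg is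
the slope over `[0, K_L]`, the short leg minus the slope over `[-K_S, 0]`. Slopes of a convex
function through a fixed point increase with the other endpoint, which gives both monotonicities. -/

lemma rpow_sub_one_div_le_of_le {q : ℝ} (hq : 0 < q) {x y : ℝ} (hx : x ≠ 0) (hy : y ≠ 0)
    (hxy : x ≤ y) : (q ^ x - 1) / x ≤ (q ^ y - 1) / y := by
  simpa using (convexOn_rpow_left hq).secant_mono (Set.mem_univ 0) (Set.mem_univ x)
    (Set.mem_univ y) hx hy hxy

lemma rpow_neg_sub_one_div_le_of_le {q : ℝ} (hq : 0 < q) {x y : ℝ} (hx : 0 < x) (hxy : x ≤ y) :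
    (q ^ (-x) - 1) / x ≤ (q ^ (-y) - 1) / y := by
  have h := rpow_sub_one_div_le_of_le hq (neg_ne_zero.mpr (hx.trans_le hxy).ne')
    (neg_ne_zero.mpr hx.ne') (neg_le_neg hxy)
  rwa [div_neg, div_neg, neg_le_neg_iff] at h

theorem gsls_gain_monotone (I₀ α q : ℝ) (hI : 0 < I₀) (hα : 0 < α) (hq : 0 < q)
    (KL KL' KS KS' : ℝ) (hKL : 0 < KL) (hKL' : KL ≤ KL') (hKS : 0 < KS) (hKS' : KS ≤ KS') :
    I₀ * (q ^ KL - 1) / KL + α * I₀ * (q ^ (-KS) - 1) / KS ≤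
      I₀ * (q ^ KL' - 1) / KL' + α * I₀ * (q ^ (-KS') - 1) / KS' := by
  have hlong := rpow_sub_one_div_le_of_le hq hKL.ne' (hKL.trans_le hKL').ne' hKL'
  have hshort := rpow_neg_sub_one_div_le_of_le hq hKS hKS'
  simp only [mul_div_assoc]
  have hαI := (mul_pos hα hI).le
  gcongr
end

section
/- Let I₀ > 0 and K > 0 be real numbers, and let p : ℝ → ℝ be a differentiable function with p(t) > 0 for all t. Define g(t) = (I₀/K)·((p(t)/p(0))^K − 1). Then g is differentiable and for every t, g'(t) = (p'(t)/p(t))·(I₀ + K·g(t)). -/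
theorem long_gain_ode (I₀ K : ℝ) (hI : 0 < I₀) (hK : 0 < K)
    (p : ℝ → ℝ) (hp : Differentiable ℝ p) (hpos : ∀ t, 0 < p t) :
    Differentiable ℝ (fun t => (I₀ / K) * ((p t / p 0) ^ K - 1)) ∧
      ∀ t, deriv (fun t => (I₀ / K) * ((p t / p 0) ^ K - 1)) t =
        (deriv p t / p t) * (I₀ + K * ((I₀ / K) * ((p t / p 0) ^ K - 1))) := by
  have hq : ∀ t, 0 < p t / p 0 := fun t => div_pos (hpos t) (hpos 0)
  have key : ∀ t, HasDerivAt (fun t => (I₀ / K) * ((p t / p 0) ^ K - 1))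
      ((I₀ / K) * (deriv p t / p 0 * K * (p t / p 0) ^ (K - 1))) t := by
    intro t
    have h1 : HasDerivAt (fun t => p t / p 0) (deriv p t / p 0) t :=
      ((hp t).hasDerivAt).div_const _
    have h2 : HasDerivAt (fun t => (p t / p 0) ^ K - 1)
        (deriv p t / p 0 * K * (p t / p 0) ^ (K - 1)) t :=
      (h1.rpow_const (Or.inl (hq t).ne')).sub_const 1
    exact h2.const_mul _
  refine ⟨fun t => (key t).differentiableAt, fun t => ?_⟩
  rw [(key t).deriv]
  have hK' : K ≠ 0 := hK.ne'
  have hpt : p t ≠ 0 := (hpos t).ne'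
  have hp0 : p 0 ≠ 0 := (hpos 0).ne'
  have hqpow : (p t / p 0) ^ (K - 1) = (p t / p 0) ^ K * (p 0 / p t) := by
    rw [Real.rpow_sub (hq t), Real.rpow_one]
    field_simp
  rw [hqpow]
  field_simp
  ring
end

section
/- Let I₀ > 0, K > 0 and 0 < α < 1 be real numbers and let q > 0. Then the GSLS gain with β = 1, g(q) = (I₀/K)·(q^K − 1 + α·(q^(−K) − 1)), satisfies g(q) > 0 if and only if q ∉ [α^(1/K), 1]. -/
theorem gsls_beta_one_pos_gain_alpha_lt_one (I₀ K α q : ℝ)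
    (hI : 0 < I₀) (hK : 0 < K) (hα0 : 0 < α) (hα1 : α < 1) (hq : 0 < q) :
    (I₀ / K) * (q ^ K - 1 + α * (q ^ (-K) - 1)) > 0 ↔ q ∉ Set.Icc (α ^ (1 / K)) 1 := by
  have hx : (0:ℝ) < q ^ K := Real.rpow_pos_of_pos hq K
  have hneg : q ^ (-K) = (q ^ K)⁻¹ := Real.rpow_neg hq.le K
  have key : q ^ K - 1 + α * (q ^ (-K) - 1) = (q ^ K - 1) * (q ^ K - α) / q ^ K := by
    rw [hneg]; field_simp; ring
  have hIK : 0 < I₀ / K := div_pos hI hK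
  have hc : (α ^ (1 / K)) ^ K = α := by
    rw [← Real.rpow_mul hα0.le, one_div_mul_cancel hK.ne', Real.rpow_one]
  have h1 : q ≤ 1 ↔ q ^ K ≤ 1 := by
    nth_rewrite 2 [show (1:ℝ) = 1 ^ K by simp]
    rw [Real.rpow_le_rpow_iff hq.le zero_le_one hK]
  have h2 : α ^ (1 / K) ≤ q ↔ α ≤ q ^ K := by
    nth_rewrite 2 [← hc]
    rw [Real.rpow_le_rpow_iff (Real.rpow_nonneg hα0.le _) hq.le hK]
  rw [key, Set.mem_Icc, not_and_or, not_le, not_le, ← not_le, ← not_le, h1, h2]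
  rw [gt_iff_lt, mul_pos_iff_of_pos_left hIK, div_pos_iff_of_pos_right hx]
  constructor
  · rintro h
    rcases lt_trichotomy (q ^ K) 1 with hlt | heq | hgt
    · left
      intro hle
      nlinarith
    · simp [heq] at h
    · right; intro hle; linarith
  · rintro (h | h)
    · push_neg at h
      nlinarith
    · push_neg at h
      nlinarith
end

section
/- Let I₀ > 0, K > 0 and α > 1 be real numbers and let q > 0. Then the GSLS gain with β = 1, g(q) = (I₀/K)·(q^K − 1 + α·(q^(−K) − 1)), satisfies g(q) > 0 if and only if q ∉ [1, α^(1/K)]. -/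
theorem gsls_beta_one_pos_gain_alpha_gt_one (I₀ K α q : ℝ)
    (hI : 0 < I₀) (hK : 0 < K) (hα : 1 < α) (hq : 0 < q) :
    (I₀ / K) * (q ^ K - 1 + α * (q ^ (-K) - 1)) > 0 ↔ q ∉ Set.Icc 1 (α ^ (1 / K)) := by
  have hx : 0 < q ^ K := Real.rpow_pos_of_pos hq K
  have key : q ^ K - 1 + α * (q ^ (-K) - 1) = (q ^ K - 1) * (q ^ K - α) / q ^ K := by
    rw [Real.rpow_neg hq.le]
    field_simp
    ring
  have hIK : 0 < I₀ / K := div_pos hI hK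
  rw [key, gt_iff_lt, mul_pos_iff_of_pos_left hIK, div_pos_iff]
  have h1 : q ^ K < 1 ↔ q < 1 := by
    rw [Real.rpow_lt_one_iff_of_pos hq]
    constructor
    · rintro (⟨_, hy⟩ | ⟨h, _⟩)
      · linarith
      · exact h
    · exact fun h => Or.inr ⟨h, hK⟩
  have h2 : α < q ^ K ↔ α ^ (1 / K) < q := by
    rw [one_div, Real.rpow_inv_lt_iff_of_pos (by linarith) hq.le hK]
  have h3 : (1:ℝ) < q ^ K ↔ 1 < q := by
    rw [Real.one_lt_rpow_iff_of_pos hq]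
    constructor
    · rintro (⟨h, _⟩ | ⟨_, hy⟩)
      · exact h
      · linarith
    · exact fun h => Or.inl ⟨h, hK⟩
  constructor
  · rintro (⟨hpos, -⟩ | ⟨-, hd⟩) ⟨hl, hr⟩
    · rcases mul_pos_iff.mp hpos with ⟨ha, hb⟩ | ⟨ha, hb⟩
      · have : α ^ (1/K) < q := h2.mp (by linarith)
        exact absurd hr (not_le.mpr this)
      · have : q < 1 := h1.mp (by linarith)
        exact absurd hl (not_le.mpr this)
    · linarith
  · intro h
    left
    refine ⟨?_, hx⟩
    rw [Set.mem_Icc, not_and_or, not_le, not_le] at h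
    rcases h with h | h
    · have hx1 : q ^ K < 1 := h1.mpr h
      exact mul_pos_of_neg_of_neg (by linarith) (by linarith)
    · have hxa : α < q ^ K := h2.mpr h
      have hx1 : (1:ℝ) < q ^ K := lt_trans hα hxa
      exact mul_pos (by linarith) (by linarith)
end

section
/- Let I₀ > 0, α > 0, β > 0 be real numbers and let q > 0 with q ≠ 1. Then there exists K₀ > 0 such that for all K ≥ K₀ the GSLS gain is strictly positive: (I₀/K)·(q^K − 1) + (α·I₀/(β·K))·(q^(−β·K) − 1) > 0. -/
theorem gsls_large_K_positive_gain (I₀ α β q : ℝ)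
    (hI : 0 < I₀) (hα : 0 < α) (hβ : 0 < β) (hq : 0 < q) (hq1 : q ≠ 1) :
    ∃ K₀ : ℝ, 0 < K₀ ∧ ∀ K : ℝ, K₀ ≤ K →
      (I₀ / K) * (q ^ K - 1) + (α * I₀ / (β * K)) * (q ^ (-(β * K)) - 1) > 0 := by
  rcases lt_or_gt_of_ne hq1 with hlt | hgt
  · -- q < 1 : short side dominates
    have hlog : Real.log q < 0 := Real.log_neg hq hlt
    have hden : 0 < β * (-Real.log q) := mul_pos hβ (by linarith)
    refine ⟨max 1 (Real.log (β / α + 2) / (β * (-Real.log q))), by positivity, ?_⟩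
    intro K hK
    have hK1 : (1 : ℝ) ≤ K := le_trans (le_max_left _ _) hK
    have hKpos : 0 < K := by linarith
    have hexp : Real.log (β / α + 2) ≤ Real.log q * -(β * K) := by
      have := le_trans (le_max_right _ _) hK
      have := (div_le_iff₀ hden).mp this
      nlinarith
    have hA : β / α + 2 ≤ q ^ (-(β * K)) := by
      rw [Real.rpow_def_of_pos hq]
      calc β / α + 2 = Real.exp (Real.log (β / α + 2)) := by
            rw [Real.exp_log]; positivity
        _ ≤ Real.exp (Real.log q * -(β * K)) := Real.exp_le_exp.mpr hexp
    have hB : (0 : ℝ) < q ^ K := Real.rpow_pos_of_pos hq K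
    have hIK : 0 < I₀ / K := div_pos hI hKpos
    have hc : 0 < α * I₀ / (β * K) := div_pos (mul_pos hα hI) (mul_pos hβ hKpos)
    have t1 : (α * I₀ / (β * K)) * (β / α + 1) ≤ (α * I₀ / (β * K)) * (q ^ (-(β * K)) - 1) :=
      mul_le_mul_of_nonneg_left (by linarith) hc.le
    have t2 : (I₀ / K) * (-1) < (I₀ / K) * (q ^ K - 1) :=
      mul_lt_mul_of_pos_left (by linarith) hIK
    have key : (α * I₀ / (β * K)) * (β / α + 1) = I₀ / K + α * I₀ / (β * K) := by
      field_simp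
    linarith
  · -- q > 1 : long side dominates
    have hlog : 0 < Real.log q := Real.log_pos hgt
    refine ⟨max 1 (Real.log (α / β + 2) / Real.log q), by positivity, ?_⟩
    intro K hK
    have hK1 : (1 : ℝ) ≤ K := le_trans (le_max_left _ _) hK
    have hKpos : 0 < K := by linarith
    have hexp : Real.log (α / β + 2) ≤ Real.log q * K := by
      have := le_trans (le_max_right _ _) hK
      have := (div_le_iff₀ hlog).mp this
      nlinarith
    have hA : α / β + 2 ≤ q ^ K := by
      rw [Real.rpow_def_of_pos hq]
      calc α / β + 2 = Real.exp (Real.log (α / β + 2)) := by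
            rw [Real.exp_log]; positivity
        _ ≤ Real.exp (Real.log q * K) := Real.exp_le_exp.mpr hexp
    have hB : (0 : ℝ) < q ^ (-(β * K)) := Real.rpow_pos_of_pos hq _
    have hIK : 0 < I₀ / K := div_pos hI hKpos
    have hc : 0 < α * I₀ / (β * K) := div_pos (mul_pos hα hI) (mul_pos hβ hKpos)
    have t1 : (I₀ / K) * (α / β + 1) ≤ (I₀ / K) * (q ^ K - 1) :=
      mul_le_mul_of_nonneg_left (by linarith) hIK.le
    have t2 : (α * I₀ / (β * K)) * (-1) < (α * I₀ / (β * K)) * (q ^ (-(β * K)) - 1) :=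
      mul_lt_mul_of_pos_left (by linarith) hc
    have key : (I₀ / K) * (α / β + 1) = α * I₀ / (β * K) + I₀ / K := by
      field_simp
    linarith
end

section
/- Let I₀ > 0, K > 0, α > 0, β > 0, σ ∈ ℝ, μ ∈ ℝ and t ≥ 0 be real numbers, and let γ denote the standard Gaussian measure N(0,1) on ℝ. Then ∫ z, (I₀/K)·(exp((K·μ − K²·σ²/2)·t + K·σ·√t·z) − 1) + (α·I₀/(β·K))·(exp((−β·K·μ − β²·K²·σ²/2)·t − β·K·σ·√t·z) − 1) dγ(z) = (I₀/K)·(exp(K·μ·t) − 1 + (α/β)·(exp(−β·K·μ·t) − 1)). -/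
open MeasureTheory ProbabilityTheory Real

/-! Each leg of the gain is `c * (exp (a + s Z) - 1)` with `Z` standard Gaussian, and the Gaussian
moment generating function gives `E[exp (a + s Z)] = exp (a + s² / 2)`. The Itô correction
`-K²σ²t/2` (resp. `-β²K²σ²t/2`) in the drift cancels `s² / 2` exactly, leaving `exp (K μ t)`
(resp. `exp (-β K μ t)`). -/

section GaussianExp

variable {m : ℝ} {v : NNReal}

lemma integrable_exp_add_mul_gaussianReal (a s : ℝ) :
    Integrable (fun x ↦ exp (a + s * x)) (gaussianReal m v) := by
  simpa only [exp_add] using (integrable_exp_mul_gaussianReal s).const_mul (exp a)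

lemma integral_exp_add_mul_gaussianReal (a s : ℝ) :
    ∫ x, exp (a + s * x) ∂gaussianReal m v = exp (a + m * s + v * s ^ 2 / 2) := by
  have hmgf := congrFun (mgf_fun_id_gaussianReal (μ := m) (v := v)) s
  rw [mgf] at hmgf
  simp only [exp_add, integral_const_mul]
  rw [hmgf, exp_add, mul_assoc]

lemma integrable_mul_exp_add_mul_sub_one_gaussianReal (c a s : ℝ) :
    Integrable (fun x ↦ c * (exp (a + s * x) - 1)) (gaussianReal m v) :=
  ((integrable_exp_add_mul_gaussianReal a s).sub (integrable_const 1)).const_mul c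

lemma integral_mul_exp_add_mul_sub_one_gaussianReal (c a s : ℝ) :
    ∫ x, c * (exp (a + s * x) - 1) ∂gaussianReal m v =
      c * (exp (a + m * s + v * s ^ 2 / 2) - 1) := by
  rw [integral_const_mul, integral_sub (integrable_exp_add_mul_gaussianReal a s) (integrable_const 1),
    integral_exp_add_mul_gaussianReal, integral_const, probReal_univ, one_smul]

end GaussianExp

theorem gsls_expected_gain_gbm_general (I₀ K α β σ μ t : ℝ)
    (ht : 0 ≤ t) :
    ∫ z : ℝ,
        ((I₀ / K) * (Real.exp ((K * μ - K ^ 2 * σ ^ 2 / 2) * t + K * σ * Real.sqrt t * z) - 1) +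
          (α * I₀ / (β * K)) *
            (Real.exp ((-(β * K * μ) - β ^ 2 * K ^ 2 * σ ^ 2 / 2) * t - β * K * σ * Real.sqrt t * z) - 1))
        ∂(gaussianReal 0 1) =
      (I₀ / K) * (Real.exp (K * μ * t) - 1 + (α / β) * (Real.exp (-(β * K * μ) * t) - 1)) := by
  have hshort_exponent : ∀ z : ℝ,
      (-(β * K * μ) - β ^ 2 * K ^ 2 * σ ^ 2 / 2) * t - β * K * σ * √t * z =
        (-(β * K * μ) - β ^ 2 * K ^ 2 * σ ^ 2 / 2) * t + -(β * K * σ * √t) * z := fun z ↦ by ring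
  simp_rw [hshort_exponent]
  rw [integral_add (integrable_mul_exp_add_mul_sub_one_gaussianReal _ _ _)
      (integrable_mul_exp_add_mul_sub_one_gaussianReal _ _ _),
    integral_mul_exp_add_mul_sub_one_gaussianReal, integral_mul_exp_add_mul_sub_one_gaussianReal]
  have hsq : √t ^ 2 = t := sq_sqrt ht
  have hlong_mean : (K * μ - K ^ 2 * σ ^ 2 / 2) * t + 0 * (K * σ * √t)
      + (1 : NNReal) * (K * σ * √t) ^ 2 / 2 = K * μ * t := by
    rw [mul_pow, hsq]; push_cast; ring
  have hshort_mean : (-(β * K * μ) - β ^ 2 * K ^ 2 * σ ^ 2 / 2) * t + 0 * -(β * K * σ * √t)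
      + (1 : NNReal) * (-(β * K * σ * √t)) ^ 2 / 2 = -(β * K * μ) * t := by
    rw [neg_sq, mul_pow, hsq]; push_cast; ring
  rw [hlong_mean, hshort_mean]
  ring

theorem gsls_expected_gain_gbm (I₀ K α β σ μ t : ℝ)
    (hI : 0 < I₀) (hK : 0 < K) (hα : 0 < α) (hβ : 0 < β) (ht : 0 ≤ t) :
    ∫ z : ℝ,
        ((I₀ / K) * (Real.exp ((K * μ - K ^ 2 * σ ^ 2 / 2) * t + K * σ * Real.sqrt t * z) - 1) +
          (α * I₀ / (β * K)) *
            (Real.exp ((-(β * K * μ) - β ^ 2 * K ^ 2 * σ ^ 2 / 2) * t - β * K * σ * Real.sqrt t * z) - 1))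
        ∂(gaussianReal 0 1) =
      (I₀ / K) * (Real.exp (K * μ * t) - 1 + (α / β) * (Real.exp (-(β * K * μ) * t) - 1)) :=
  gsls_expected_gain_gbm_general I₀ K α β σ μ t ht
end

section
/- Let I₀ > 0, K > 0, α > 0, β > 0, μ ∈ ℝ and t ≥ 0 be real numbers with (1 − α)·μ ≥ 0. Then (I₀/K)·(exp(K·μ·t) − 1 + (α/β)·(exp(−β·K·μ·t) − 1)) ≥ I₀·(1 − α)·μ·t ≥ 0. -/
theorem gsls_expected_gain_nonneg (I₀ K α β μ t : ℝ)
    (hI : 0 < I₀) (hK : 0 < K) (hα : 0 < α) (hβ : 0 < β) (ht : 0 ≤ t)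
    (hcond : (1 - α) * μ ≥ 0) :
    (I₀ / K) * (Real.exp (K * μ * t) - 1 + (α / β) * (Real.exp (-(β * K * μ) * t) - 1)) ≥
        I₀ * (1 - α) * μ * t ∧ I₀ * (1 - α) * μ * t ≥ 0 := by
  have h1 : K * μ * t + 1 ≤ Real.exp (K * μ * t) := Real.add_one_le_exp _
  have h2 : -(β * K * μ) * t + 1 ≤ Real.exp (-(β * K * μ) * t) := Real.add_one_le_exp _
  have h2' : (α / β) * (Real.exp (-(β * K * μ) * t) - 1) ≥ -(α * (K * μ * t)) := by
    have := mul_le_mul_of_nonneg_left (by linarith : -(β * K * μ) * t ≤ Real.exp (-(β * K * μ) * t) - 1) (le_of_lt (div_pos hα hβ))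
    calc (α / β) * (Real.exp (-(β * K * μ) * t) - 1) ≥ (α / β) * (-(β * K * μ) * t) := this
      _ = -(α * (K * μ * t)) := by field_simp
  have key : Real.exp (K * μ * t) - 1 + (α / β) * (Real.exp (-(β * K * μ) * t) - 1) ≥
      (1 - α) * (K * μ * t) := by nlinarith
  constructor
  · have := mul_le_mul_of_nonneg_left key (le_of_lt (div_pos hI hK))
    calc (I₀ / K) * (Real.exp (K * μ * t) - 1 + (α / β) * (Real.exp (-(β * K * μ) * t) - 1))
        ≥ (I₀ / K) * ((1 - α) * (K * μ * t)) := this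
      _ = I₀ * (1 - α) * μ * t := by field_simp
  · have : I₀ * (1 - α) * μ * t = I₀ * ((1 - α) * μ) * t := by ring
    rw [this]
    exact mul_nonneg (mul_nonneg hI.le hcond) ht
end
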